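/- arXiv:1809.08315 — 8 statements merged into one kernel-verified Lean document; each statement's English description precedes it below -/
import Mathlib

section
/- Let f : [0,1] → ℝ be continuous and define u(z) = ∫₀¹ G(z,y) f(y) dy where G(z,y) = (1/2)·e^{-|z-y|}. Then u is twice continuously differentiable on [0,1], satisfies the differential equation u(z) - u''(z) = f(z) for all z ∈ [0,1], and satisfies the boundary conditions u(0) = u'(0) and u(1) = -u'(1). -/
/-!
Split the integral at `y = z`: on `[a, b]` the potential `u = ∫ₐᵇ ½ e^{-|z-y|} f(y) dy` is
`(L + R) / 2` with `L z = e^{-z} ∫ₐᶻ e^y f(y) dy` and `R z = e^z ∫_zᵇ e^{-y} f(y) dy`.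
These satisfy `L' = f - L` and `R' = R - f`, so `u' = (R - L) / 2` and `u'' = u - f`;
since `L a = 0` and `R b = 0`, the Robin conditions `u(a) = u'(a)` and `u(b) = -u'(b)` follow.
-/

open Real Set intervalIntegral

noncomputable def greenLeft (a : ℝ) (g : ℝ → ℝ) (z : ℝ) : ℝ := exp (-z) * ∫ y in a..z, exp y * g y

noncomputable def greenRight (b : ℝ) (g : ℝ → ℝ) (z : ℝ) : ℝ := exp z * ∫ y in z..b, exp (-y) * g y

section GreenParts

variable {g : ℝ → ℝ}

@[simp]
lemma greenLeft_self (a : ℝ) : greenLeft a g a = 0 := by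
  simp [greenLeft]

@[simp]
lemma greenRight_self (b : ℝ) : greenRight b g b = 0 := by
  simp [greenRight]

lemma hasDerivAt_greenLeft (hg : Continuous g) (a z : ℝ) :
    HasDerivAt (greenLeft a g) (g z - greenLeft a g z) z := by
  have hc : Continuous fun y => exp y * g y := continuous_exp.mul hg
  have hint := integral_hasDerivAt_right (hc.intervalIntegrable a z)
    (hc.stronglyMeasurableAtFilter _ _) hc.continuousAt
  refine ((hasDerivAt_neg z).exp.mul hint).congr_deriv ?_
  rw [greenLeft, ← mul_assoc, ← exp_add, neg_add_cancel, exp_zero]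
  ring

lemma hasDerivAt_greenRight (hg : Continuous g) (b z : ℝ) :
    HasDerivAt (greenRight b g) (greenRight b g z - g z) z := by
  have hc : Continuous fun y => exp (-y) * g y := (continuous_exp.comp continuous_neg).mul hg
  have hint := integral_hasDerivAt_left (hc.intervalIntegrable z b)
    (hc.stronglyMeasurableAtFilter _ _) hc.continuousAt
  refine ((hasDerivAt_exp z).mul hint).congr_deriv ?_
  rw [greenRight, mul_neg, ← mul_assoc, ← exp_add, add_neg_cancel, exp_zero]
  ring

lemma integral_exp_neg_abs_mul_eq_greenLeft_add_greenRight (hg : Continuous g) {a b z : ℝ}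
    (hz : z ∈ Icc a b) :
    ∫ y in a..b, exp (-|z - y|) * g y = greenLeft a g z + greenRight b g z := by
  have hc : Continuous fun y => exp (-|z - y|) * g y := by fun_prop
  rw [← integral_add_adjacent_intervals (hc.intervalIntegrable a z) (hc.intervalIntegrable z b),
    greenLeft, greenRight, ← integral_const_mul, ← integral_const_mul]
  congr 1
  · refine integral_congr fun y hy => ?_
    rw [uIcc_of_le hz.1] at hy
    simp only [abs_of_nonneg (sub_nonneg.2 hy.2), ← mul_assoc, ← exp_add]
    ring_nf
  · refine integral_congr fun y hy => ?_
    rw [uIcc_of_le hz.2] at hy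
    simp only [abs_of_nonpos (sub_nonpos.2 hy.1), ← mul_assoc, ← exp_add]
    ring_nf

end GreenParts

lemma ContinuousOn.exists_continuous_eqOn_Icc {α β : Type*} [LinearOrder α] [TopologicalSpace α]
    [OrderTopology α] [TopologicalSpace β] {a b : α} (hab : a ≤ b) {f : α → β}
    (hf : ContinuousOn f (Icc a b)) : ∃ g : α → β, Continuous g ∧ EqOn g f (Icc a b) :=
  ⟨IccExtend hab ((Icc a b).domRestrict f), hf.domRestrict.Icc_extend',
    fun _ hx => IccExtend_of_mem hab _ hx⟩

section Calculus

variable {𝕜 F : Type*} [NontriviallyNormedField 𝕜] [NormedAddCommGroup F] [NormedSpace 𝕜 F]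

lemma eqOn_derivWithin_of_eqOn_of_hasDerivAt {s : Set 𝕜} {u v v' : 𝕜 → F}
    (hs : UniqueDiffOn 𝕜 s) (huv : EqOn u v s) (hv : ∀ z ∈ s, HasDerivAt v (v' z) z) :
    EqOn (derivWithin u s) v' s := fun z hz => by
  rw [derivWithin_congr huv (huv hz)]
  exact (hv z hz).hasDerivWithinAt.derivWithin (hs z hz)

lemma contDiff_two_of_hasDerivAt {v w w₂ : 𝕜 → F} (hv : ∀ z, HasDerivAt v (w z) z)
    (hw : ∀ z, HasDerivAt w (w₂ z) z) (hw₂ : Continuous w₂) : ContDiff 𝕜 2 v := by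
  rw [show (2 : WithTop ℕ∞) = 1 + 1 from rfl, contDiff_succ_iff_deriv,
    funext fun z => (hv z).deriv, contDiff_one_iff_deriv, funext fun z => (hw z).deriv]
  exact ⟨fun z => (hv z).differentiableAt, by simp, fun z => (hw z).differentiableAt, hw₂⟩

end Calculus

def SolvesRobinBVP (a b : ℝ) (f u : ℝ → ℝ) : Prop :=
  ContDiffOn ℝ 2 u (Icc a b) ∧
    (∀ z ∈ Icc a b, u z - derivWithin (derivWithin u (Icc a b)) (Icc a b) z = f z) ∧
    u a = derivWithin u (Icc a b) a ∧ u b = -derivWithin u (Icc a b) b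

lemma SolvesRobinBVP.congr_rhs {a b : ℝ} {f g u : ℝ → ℝ} (hu : SolvesRobinBVP a b g u)
    (hgf : EqOn g f (Icc a b)) : SolvesRobinBVP a b f u :=
  ⟨hu.1, fun z hz => (hu.2.1 z hz).trans (hgf hz), hu.2.2⟩

lemma solvesRobinBVP_of_continuous {a b : ℝ} (hab : a < b) {g : ℝ → ℝ} (hg : Continuous g)
    {u : ℝ → ℝ} (hu : EqOn u (fun z => ∫ y in a..b, (1/2) * exp (-|z - y|) * g y) (Icc a b)) :
    SolvesRobinBVP a b g u := by
  set L := greenLeft a g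
  set R := greenRight b g
  have hv (z : ℝ) : HasDerivAt (fun z => (L z + R z) / 2) ((R z - L z) / 2) z :=
    (((hasDerivAt_greenLeft hg a z).add (hasDerivAt_greenRight hg b z)).div_const 2).congr_deriv
      (by ring)
  have hw (z : ℝ) : HasDerivAt (fun z => (R z - L z) / 2) ((L z + R z) / 2 - g z) z :=
    (((hasDerivAt_greenRight hg b z).sub (hasDerivAt_greenLeft hg a z)).div_const 2).congr_deriv
      (by ring)
  have huv : EqOn u (fun z => (L z + R z) / 2) (Icc a b) := fun z hz => by
    simp only [hu hz, mul_assoc, integral_const_mul,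
      integral_exp_neg_abs_mul_eq_greenLeft_add_greenRight hg hz]
    ring
  have hs : UniqueDiffOn ℝ (Icc a b) := uniqueDiffOn_Icc hab
  have hu' := eqOn_derivWithin_of_eqOn_of_hasDerivAt hs huv fun z _ => hv z
  have hu'' := eqOn_derivWithin_of_eqOn_of_hasDerivAt hs hu' fun z _ => hw z
  have ha : a ∈ Icc a b := left_mem_Icc.2 hab.le
  have hb : b ∈ Icc a b := right_mem_Icc.2 hab.le
  refine ⟨(contDiff_two_of_hasDerivAt hv hw ?_).contDiffOn.congr huv, fun z hz => ?_, ?_, ?_⟩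
  · exact (continuous_iff_continuousAt.2 fun z => (hv z).continuousAt).sub hg
  · rw [huv hz, hu'' hz]
    ring
  · rw [huv ha, hu' ha]
    simp only [L, greenLeft_self]
    ring
  · rw [huv hb, hu' hb]
    simp only [R, greenRight_self]
    ring

theorem ContinuousOn.solvesRobinBVP {a b : ℝ} (hab : a < b) {f : ℝ → ℝ}
    (hf : ContinuousOn f (Icc a b)) {u : ℝ → ℝ}
    (hu : EqOn u (fun z => ∫ y in a..b, (1/2) * exp (-|z - y|) * f y) (Icc a b)) :
    SolvesRobinBVP a b f u := by
  obtain ⟨g, hg, hgf⟩ := hf.exists_continuous_eqOn_Icc hab.le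
  refine (solvesRobinBVP_of_continuous hab hg fun z hz => ?_).congr_rhs hgf
  rw [hu hz]
  refine integral_congr fun y hy => ?_
  rw [uIcc_of_le hab.le] at hy
  simp only [hgf hy]

/-- The kernel `G(z,y) = (1/2)·e^{-|z-y|}` is the Green's function of the two-point
boundary value problem `u - u'' = f` on `[0,1]` with Robin boundary conditions
`u(0) = u'(0)` and `u(1) = -u'(1)`: for continuous `f`, the function
`u(z) = ∫₀¹ G(z,y) f(y) dy` is twice continuously differentiable on `[0,1]`,
satisfies `u - u'' = f` on `[0,1]`, and satisfies the boundary conditions. -/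
theorem exp_kernel_is_green_function_root
    (f : ℝ → ℝ) (hf : ContinuousOn f (Set.Icc 0 1))
    (u : ℝ → ℝ)
    (hu : ∀ z, u z = ∫ y in (0:ℝ)..1, (1/2) * Real.exp (-|z - y|) * f y) :
    ContDiffOn ℝ 2 u (Set.Icc 0 1) ∧
    (∀ z ∈ Set.Icc (0:ℝ) 1,
      u z - derivWithin (derivWithin u (Set.Icc 0 1)) (Set.Icc 0 1) z = f z) ∧
    u 0 = derivWithin u (Set.Icc 0 1) 0 ∧
    u 1 = - derivWithin u (Set.Icc 0 1) 1 :=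
  hf.solvesRobinBVP zero_lt_one fun z _ => hu z
end

section
/- Let z₁ < z₂ < ⋯ < z_N be distinct real numbers. Then the N×N matrix A with entries A_{i,j} = e^{-|z_i - z_j|} is symmetric positive definite. -/
/-!
Since `|a - b| = a + b - 2 min a b`, the matrix is `D M D` with `D = diag (e^{-z_i})` and
`M_{ij} = m (min i j)` for the increasing positive sequence `m i = e^{2 z_i}`. Writing
`m i = ∑_{k ≤ i} d k` with `d k = m k - m (k - 1) > 0`, the min-matrix factors as `Uᴴ diag(d) U`
with `U` the upper triangular matrix of ones, which is invertible. Hence `M`, and so `D M D`,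
is a congruence transform of a positive diagonal matrix.
-/

open Matrix Finset

namespace Matrix

variable {ι R : Type*} [LinearOrder ι]

variable (ι R) in
def upperOnes [Zero R] [One R] : Matrix ι ι R :=
  of fun k i => if k ≤ i then 1 else 0

variable [Fintype ι]

theorem det_upperOnes [CommRing R] : (upperOnes ι R).det = 1 :=
  (det_of_isUpperTriangular fun _ _ hji => if_neg (not_le.mpr hji)).trans (by simp)

theorem upperOnes_conjTranspose_mul_diagonal_mul_upperOnes [CommRing R] [StarRing R]
    [LocallyFiniteOrderBot ι] (d : ι → R) :
    (upperOnes ι R)ᴴ * diagonal d * upperOnes ι R = of fun i j => ∑ k ∈ Iic (min i j), d k := by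
  ext i j
  rw [mul_apply, of_apply, ← filter_ge_eq_Iic, sum_filter]
  refine sum_congr rfl fun k _ => ?_
  simp only [mul_diagonal, conjTranspose_apply, upperOnes, of_apply, le_min_iff]
  split_ifs <;> simp_all

theorem posDef_of_sum_Iic_min [Field R] [PartialOrder R] [StarRing R] [StarOrderedRing R]
    [LocallyFiniteOrderBot ι] {d : ι → R} (hd : ∀ k, 0 < d k) :
    (of fun i j => ∑ k ∈ Iic (min i j), d k).PosDef := by
  rw [← upperOnes_conjTranspose_mul_diagonal_mul_upperOnes]
  refine (posDef_diagonal_iff.mpr hd).conjTranspose_mul_mul_same ?_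
  rw [mulVec_injective_iff_isUnit, isUnit_iff_isUnit_det, det_upperOnes]
  exact isUnit_one

end Matrix

theorem Fin.exists_pos_sum_Iic_eq_of_strictMono {N : ℕ} {m : Fin N → ℝ} (hm : StrictMono m)
    (hm₀ : ∀ i, 0 < m i) : ∃ d : Fin N → ℝ, (∀ k, 0 < d k) ∧ ∀ i, ∑ k ∈ Iic i, d k = m i := by
  set M : ℕ → ℝ := fun n => if h : n < N then m ⟨n, h⟩ else 0
  -- `G` is `m` shifted by one place, with `G 0 = 0`, so that `d k = G (k + 1) - G k` telescopes.
  set G : ℕ → ℝ := fun n => Nat.casesOn n 0 M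
  refine ⟨fun k => G (k + 1) - G k, fun ⟨k, hk⟩ => ?_, fun i => ?_⟩
  · cases k with
    | zero => simpa [G, M, hk] using hm₀ ⟨0, hk⟩
    | succ n =>
      have hn : n < N := by omega
      simpa [G, M, hk, hn] using hm (show (⟨n, hn⟩ : Fin N) < ⟨n + 1, hk⟩ from n.lt_succ_self)
  · calc ∑ k ∈ Iic i, (G (k + 1) - G k) = ∑ n ∈ Iic (i : ℕ), (G (n + 1) - G n) := by
          rw [← Fin.map_valEmbedding_Iic, sum_map]; rfl
      _ = G (i + 1) - G 0 := by rw [← Nat.range_succ_eq_Iic, sum_range_sub]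
      _ = m i := by simp [G, M]

theorem Matrix.posDef_of_strictMono_min {N : ℕ} {m : Fin N → ℝ} (hm : StrictMono m)
    (hm₀ : ∀ i, 0 < m i) : (of fun i j => m (min i j)).PosDef := by
  obtain ⟨d, hd, hsum⟩ := Fin.exists_pos_sum_Iic_eq_of_strictMono hm hm₀
  simpa only [hsum] using posDef_of_sum_Iic_min hd

theorem Real.exp_neg_abs_sub (a b : ℝ) :
    Real.exp (-|a - b|) = Real.exp (-a) * Real.exp (2 * min a b) * Real.exp (-b) := by
  rw [← Real.exp_add, ← Real.exp_add, abs_sub_comm, ← max_sub_min_eq_abs]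
  congr 1
  linarith [min_add_max a b]

/-- For distinct (strictly increasing) locations `z₁ < z₂ < ⋯ < z_N`, the exponential
covariance matrix `A_{i,j} = e^{-|z_i - z_j|}` is symmetric positive definite. -/
theorem exp_covariance_matrix_posDef
    (N : ℕ) (z : Fin N → ℝ) (hz : StrictMono z) :
    (Matrix.of fun i j : Fin N => Real.exp (-|z i - z j|)).PosDef := by
  set D := diagonal fun i => Real.exp (-z i)
  have hA : (of fun i j => Real.exp (-|z i - z j|)) =
      Dᴴ * (of fun i j => Real.exp (2 * z (min i j))) * D := by
    ext i j
    simp [D, Real.exp_neg_abs_sub, hz.monotone.map_min]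
  have hD : Function.Injective D.mulVec := by
    rw [mulVec_injective_iff_isUnit, isUnit_iff_isUnit_det, det_diagonal]
    exact (prod_pos fun i _ => Real.exp_pos _).ne'.isUnit
  rw [hA]
  exact (posDef_of_strictMono_min (Real.exp_strictMono.comp (hz.const_mul two_pos))
    fun i => Real.exp_pos _).conjTranspose_mul_mul_same hD
end

section
/- Let 0 < ζ < 1 and define G_l(z,y) = (1/2)·e^{-|z-y|} - (1/2)·e^{z+y-2ζ} for z, y ∈ [0,ζ]. For every continuous f : [0,ζ] → ℝ, the function u₁(z) = ∫₀^ζ G_l(z,y) f(y) dy is twice continuously differentiable on [0,ζ], satisfies u₁(z) - u₁''(z) = f(z) for all z ∈ [0,ζ], and satisfies the boundary conditions u₁(0) = u₁'(0) and u₁(ζ) = 0. -/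
/-!
For `z ∈ [a, b]` the integral `∫_a^b e^{-|z-y|} g y dy` splits at `y = z` into
`e^{-z} ∫_a^z e^y g + e^z ∫_z^b e^{-y} g`, the variation-of-parameters solution of
`u - u'' = 2 g`. Once `g` is extended continuously off `[a, b]` this form is smooth on all of `ℝ`,
and differentiating it twice gives the equation. The rank-one correction `e^{z+y-2b}` only adds
a multiple of the homogeneous solution `e^z`. At `z = a` the first integral vanishes, which gives
`u = u'` (as for `e^z`); at `z = b` the second vanishes and the correction cancels what is left.
-/

open Real Set intervalIntegral

/-- Agrees with `z ↦ (∫_a^b e^{-|z-y|} g y dy) / 2` only on `[a, b]`. -/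
noncomputable def expPotential (g : ℝ → ℝ) (a b z : ℝ) : ℝ :=
  (exp (-z) * ∫ y in a..z, exp y * g y) / 2 + (exp z * ∫ y in z..b, exp (-y) * g y) / 2

noncomputable def expPotentialDeriv (g : ℝ → ℝ) (a b z : ℝ) : ℝ :=
  -(exp (-z) * ∫ y in a..z, exp y * g y) / 2 + (exp z * ∫ y in z..b, exp (-y) * g y) / 2

section

variable {g : ℝ → ℝ}

theorem hasDerivAt_integral_exp_mul (hg : Continuous g) (a z : ℝ) :
    HasDerivAt (fun z => ∫ y in a..z, exp y * g y) (exp z * g z) z :=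
  ((continuous_exp.mul hg).integral_hasStrictDerivAt a z).hasDerivAt

theorem hasDerivAt_integral_exp_neg_mul (hg : Continuous g) (b z : ℝ) :
    HasDerivAt (fun z => ∫ y in z..b, exp (-y) * g y) (-(exp (-z) * g z)) z := by
  have hc : Continuous fun y => exp (-y) * g y := by fun_prop
  exact integral_hasDerivAt_left (hc.intervalIntegrable z b) (hc.stronglyMeasurableAtFilter _ _)
    hc.continuousAt

theorem hasDerivAt_expPotential (hg : Continuous g) (a b z : ℝ) :
    HasDerivAt (expPotential g a b) (expPotentialDeriv g a b z) z := by
  have hA := (hasDerivAt_id z).neg.exp.fun_mul (hasDerivAt_integral_exp_mul hg a z)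
  have hB := (hasDerivAt_exp z).fun_mul (hasDerivAt_integral_exp_neg_mul hg b z)
  have h := (hA.div_const 2).add (hB.div_const 2)
  refine h.congr_deriv ?_
  simp only [expPotentialDeriv, Pi.neg_apply, id, exp_neg]
  field_simp
  ring

theorem hasDerivAt_expPotentialDeriv (hg : Continuous g) (a b z : ℝ) :
    HasDerivAt (expPotentialDeriv g a b) (expPotential g a b z - g z) z := by
  have hA := (hasDerivAt_id z).neg.exp.fun_mul (hasDerivAt_integral_exp_mul hg a z)
  have hB := (hasDerivAt_exp z).fun_mul (hasDerivAt_integral_exp_neg_mul hg b z)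
  have h := (hA.neg.div_const 2).add (hB.div_const 2)
  refine h.congr_deriv ?_
  simp only [expPotential, Pi.neg_apply, id, exp_neg]
  field_simp
  ring

theorem integral_exp_neg_abs_mul (hg : Continuous g) {a b z : ℝ} (hz : z ∈ Icc a b) :
    (∫ y in a..b, exp (-|z - y|) * g y) / 2 = expPotential g a b z := by
  have hc : Continuous fun y => exp (-|z - y|) * g y := by fun_prop
  have hl : ∫ y in a..z, exp (-|z - y|) * g y = exp (-z) * ∫ y in a..z, exp y * g y := by
    rw [← integral_const_mul]
    refine integral_congr fun y hy => ?_
    rw [uIcc_of_le hz.1] at hy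
    rw [abs_of_nonneg (sub_nonneg.2 hy.2), neg_sub, sub_eq_add_neg, exp_add]
    ring
  have hr : ∫ y in z..b, exp (-|z - y|) * g y = exp z * ∫ y in z..b, exp (-y) * g y := by
    rw [← integral_const_mul]
    refine integral_congr fun y hy => ?_
    rw [uIcc_of_le hz.2] at hy
    rw [abs_of_nonpos (sub_nonpos.2 hy.1), neg_neg, sub_eq_add_neg, exp_add]
    ring
  rw [← integral_add_adjacent_intervals (hc.intervalIntegrable a z) (hc.intervalIntegrable z b),
    hl, hr, expPotential]
  ring

theorem expPotential_left_eq_deriv (a b : ℝ) :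
    expPotential g a b a = expPotentialDeriv g a b a := by
  simp [expPotential, expPotentialDeriv]

theorem expPotential_right_eq (a b : ℝ) :
    expPotential g a b b = exp (-b) * (∫ y in a..b, exp y * g y) / 2 := by
  simp [expPotential]

end

theorem contDiff_two_of_hasDerivAt_s4 {U V W : ℝ → ℝ} (hU : ∀ z, HasDerivAt U (V z) z)
    (hV : ∀ z, HasDerivAt V (W z) z) (hW : Continuous W) : ContDiff ℝ 2 U := by
  rw [show (2 : WithTop ℕ∞) = 1 + 1 from rfl, contDiff_succ_iff_deriv,
    funext fun z => (hU z).deriv, contDiff_one_iff_deriv, funext fun z => (hV z).deriv]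
  exact ⟨fun z => (hU z).differentiableAt, by simp, fun z => (hV z).differentiableAt, hW⟩

theorem eqOn_derivWithin_of_hasDerivWithinAt {u U U' : ℝ → ℝ} {s : Set ℝ} (hs : UniqueDiffOn ℝ s)
    (huU : EqOn u U s) (hU : ∀ z ∈ s, HasDerivWithinAt U (U' z) s z) :
    EqOn (derivWithin u s) U' s :=
  fun z hz => ((hU z hz).congr_of_mem huU hz).derivWithin (hs z hz)

theorem integral_leftKernel_mul {f g : ℝ → ℝ} (hg : Continuous g) {a b z : ℝ}
    (hgf : EqOn g f (Icc a b)) (hz : z ∈ Icc a b) :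
    ∫ y in a..b, ((1/2) * exp (-|z - y|) - (1/2) * exp (z + y - 2*b)) * f y
      = expPotential g a b z - exp (-(2 * b)) * (∫ y in a..b, exp y * g y) / 2 * exp z := by
  have hsplit : ∫ y in a..b, ((1/2) * exp (-|z - y|) - (1/2) * exp (z + y - 2*b)) * f y
      = ∫ y in a..b, (exp (-|z - y|) * g y / 2 - exp (z - 2 * b) / 2 * (exp y * g y)) := by
    refine integral_congr fun y hy => ?_
    rw [uIcc_of_le (hz.1.trans hz.2)] at hy
    rw [← hgf hy, show z + y - 2 * b = z - 2 * b + y by ring, exp_add]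
    ring
  rw [hsplit, integral_sub ((by fun_prop : Continuous _).intervalIntegrable _ _)
    ((by fun_prop : Continuous _).intervalIntegrable _ _), integral_div, integral_const_mul,
    integral_exp_neg_abs_mul hg hz, show z - 2 * b = -(2 * b) + z by ring, exp_add]
  ring

theorem left_child_kernel_is_green_function_general
    (ζ : ℝ) (hζ0 : 0 < ζ)
    (f : ℝ → ℝ) (hf : ContinuousOn f (Set.Icc 0 ζ))
    (u₁ : ℝ → ℝ)
    (hu₁ : ∀ z, u₁ z = ∫ y in (0:ℝ)..ζ,
        ((1/2) * Real.exp (-|z - y|) - (1/2) * Real.exp (z + y - 2*ζ)) * f y) :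
    ContDiffOn ℝ 2 u₁ (Set.Icc 0 ζ) ∧
    (∀ z ∈ Set.Icc (0:ℝ) ζ,
      u₁ z - derivWithin (derivWithin u₁ (Set.Icc 0 ζ)) (Set.Icc 0 ζ) z = f z) ∧
    u₁ 0 = derivWithin u₁ (Set.Icc 0 ζ) 0 ∧
    u₁ ζ = 0 := by
  set g := IccExtend hζ0.le ((Icc 0 ζ).domRestrict f)
  have hg : Continuous g := continuous_IccExtend_iff.2 hf.domRestrict
  have hgf : EqOn g f (Icc 0 ζ) := fun z hz => IccExtend_of_mem _ _ hz
  set c := exp (-(2 * ζ)) * (∫ y in 0..ζ, exp y * g y) / 2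
  set U := fun z => expPotential g 0 ζ z - c * exp z
  set V := fun z => expPotentialDeriv g 0 ζ z - c * exp z
  have hU (z : ℝ) : HasDerivAt U (V z) z :=
    (hasDerivAt_expPotential hg 0 ζ z).sub ((hasDerivAt_exp z).const_mul c)
  have hV (z : ℝ) : HasDerivAt V (U z - g z) z := by
    refine ((hasDerivAt_expPotentialDeriv hg 0 ζ z).sub
      ((hasDerivAt_exp z).const_mul c)).congr_deriv ?_
    ring
  have hu : EqOn u₁ U (Icc 0 ζ) := fun z hz => (hu₁ z).trans (integral_leftKernel_mul hg hgf hz)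
  have hs := uniqueDiffOn_Icc hζ0
  have hu' := eqOn_derivWithin_of_hasDerivWithinAt hs hu fun z _ => (hU z).hasDerivWithinAt
  have hu'' := eqOn_derivWithin_of_hasDerivWithinAt hs hu' fun z _ => (hV z).hasDerivWithinAt
  have h0 : (0 : ℝ) ∈ Icc 0 ζ := left_mem_Icc.2 hζ0.le
  have hζ : ζ ∈ Icc 0 ζ := right_mem_Icc.2 hζ0.le
  refine ⟨(contDiff_two_of_hasDerivAt_s4 hU hV
    ((continuous_iff_continuousAt.2 fun z => (hU z).continuousAt).sub hg)).contDiffOn.congr hu,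
    fun z hz => ?_, ?_, ?_⟩
  · rw [hu'' hz, hu hz]
    beta_reduce
    rw [hgf hz]
    ring
  · rw [hu' h0, hu h0]
    simp only [U, V, expPotential_left_eq_deriv]
  · have hexp : exp (-ζ) = exp (-(2 * ζ)) * exp ζ := by rw [← exp_add]; ring_nf
    rw [hu hζ]
    simp only [U, c, expPotential_right_eq, hexp]
    ring

/-- The left-child kernel `G_l(z,y) = (1/2)e^{-|z-y|} - (1/2)e^{z+y-2ζ}` is the Green's
function of `u - u'' = f` on `[0,ζ]` with boundary conditions `u(0) = u'(0)`, `u(ζ) = 0`: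
for continuous `f`, the function `u₁(z) = ∫₀^ζ G_l(z,y) f(y) dy` is twice continuously
differentiable on `[0,ζ]`, satisfies the ODE there, and satisfies the boundary conditions. -/
theorem left_child_kernel_is_green_function
    (ζ : ℝ) (hζ0 : 0 < ζ) (hζ1 : ζ < 1)
    (f : ℝ → ℝ) (hf : ContinuousOn f (Set.Icc 0 ζ))
    (u₁ : ℝ → ℝ)
    (hu₁ : ∀ z, u₁ z = ∫ y in (0:ℝ)..ζ,
        ((1/2) * Real.exp (-|z - y|) - (1/2) * Real.exp (z + y - 2*ζ)) * f y) :
    ContDiffOn ℝ 2 u₁ (Set.Icc 0 ζ) ∧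
    (∀ z ∈ Set.Icc (0:ℝ) ζ,
      u₁ z - derivWithin (derivWithin u₁ (Set.Icc 0 ζ)) (Set.Icc 0 ζ) z = f z) ∧
    u₁ 0 = derivWithin u₁ (Set.Icc 0 ζ) 0 ∧
    u₁ ζ = 0 :=
  left_child_kernel_is_green_function_general ζ hζ0 f hf u₁ hu₁
end

section
/- Let 0 < ζ < 1 and G_l(z,y) = (1/2)·e^{-|z-y|} - (1/2)·e^{z+y-2ζ}. For every continuous f : [0,ζ] → ℝ that is not identically zero, ∫₀^ζ ∫₀^ζ f(z) G_l(z,y) f(y) dy dz > 0. -/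
/-!
With `g z = f z * exp z` and `E m = (exp (-2m) - exp (-2ζ)) / 2`, the integrand is
`g z * g y * E (max z y)`. Since `E' = -exp (-2m)` and `E ζ = 0`, the inner integral `K z` has
`K' = E' * H` where `H` is the primitive of `g`, and one integration by parts turns the double
integral into `∫₀^ζ exp (-2t) * H t ^ 2 dt`. This vanishes only if `H`, hence `g`, hence `f`,
vanishes identically.
-/

open MeasureTheory Set intervalIntegral

section Primitive

variable {a b x : ℝ} {φ : ℝ → ℝ}

theorem ContinuousOn.hasDerivAt_integral_right (hφ : ContinuousOn φ (Icc a b))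
    (hx : x ∈ Ioo a b) : HasDerivAt (fun t => ∫ s in a..t, φ s) (φ x) x :=
  integral_hasDerivAt_right
    ((hφ.mono (Icc_subset_Icc_right hx.2.le)).intervalIntegrable_of_Icc hx.1.le)
    ((hφ.mono Ioo_subset_Icc_self).stronglyMeasurableAtFilter isOpen_Ioo x hx)
    (hφ.continuousAt (Icc_mem_nhds hx.1 hx.2))

theorem ContinuousOn.hasDerivAt_integral_left (hφ : ContinuousOn φ (Icc a b))
    (hx : x ∈ Ioo a b) : HasDerivAt (fun t => ∫ s in t..b, φ s) (-φ x) x :=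
  integral_hasDerivAt_left
    ((hφ.mono (Icc_subset_Icc_left hx.1.le)).intervalIntegrable_of_Icc hx.2.le)
    ((hφ.mono Ioo_subset_Icc_self).stronglyMeasurableAtFilter isOpen_Ioo x hx)
    (hφ.continuousAt (Icc_mem_nhds hx.1 hx.2))

theorem ContinuousOn.continuousOn_primitive (hab : a ≤ b) (hφ : ContinuousOn φ (Icc a b)) :
    ContinuousOn (fun t => ∫ s in a..t, φ s) (Icc a b) := by
  have := continuousOn_primitive_interval (a := a) (b := b) (μ := volume)
    (by simpa only [uIcc_of_le hab] using hφ.integrableOn_Icc (μ := volume))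
  rwa [uIcc_of_le hab] at this

theorem ContinuousOn.continuousOn_primitive_left (hab : a ≤ b) (hφ : ContinuousOn φ (Icc a b)) :
    ContinuousOn (fun t => ∫ s in t..b, φ s) (Icc a b) := by
  have := continuousOn_primitive_interval_left (a := a) (b := b) (μ := volume)
    (by simpa only [uIcc_of_le hab] using hφ.integrableOn_Icc (μ := volume))
  rwa [uIcc_of_le hab] at this

theorem ContinuousOn.eqOn_zero_of_primitive_eqOn_zero (hab : a < b)
    (hφ : ContinuousOn φ (Icc a b)) (h : ∀ t ∈ Icc a b, ∫ s in a..t, φ s = 0) :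
    EqOn φ 0 (Icc a b) := by
  have hIoo : EqOn φ 0 (Ioo a b) := fun x hx => by
    have hzero : (fun t => ∫ s in a..t, φ s) =ᶠ[nhds x] fun _ => 0 :=
      Filter.eventually_of_mem (Icc_mem_nhds hx.1 hx.2) h
    exact (hφ.hasDerivAt_integral_right hx).unique
      ((hasDerivAt_const x (0 : ℝ)).congr_of_eventuallyEq hzero)
  exact hIoo.of_subset_closure hφ continuousOn_const Ioo_subset_Icc_self
    (closure_Ioo hab.ne).superset

end Primitive

section MaxKernel

variable {a b z : ℝ} {g E w : ℝ → ℝ}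

theorem integral_mul_comp_max (hg : ContinuousOn g (Icc a b)) (hE : Continuous E)
    (hz : z ∈ Icc a b) :
    ∫ y in a..b, g y * E (max z y) = E z * (∫ y in a..z, g y) + ∫ y in z..b, g y * E y := by
  have hint : ∀ {u v}, u ∈ Icc a b → v ∈ Icc a b →
      IntervalIntegrable (fun y => g y * E (max z y)) volume u v := fun hu hv =>
    ((hg.mul (hE.comp (continuous_const.max continuous_id)).continuousOn).mono
      (uIcc_subset_Icc hu hv)).intervalIntegrable
  have ha : a ∈ Icc a b := left_mem_Icc.mpr (hz.1.trans hz.2)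
  have hb : b ∈ Icc a b := right_mem_Icc.mpr (hz.1.trans hz.2)
  rw [← integral_add_adjacent_intervals (hint ha hz) (hint hz hb),
    ← intervalIntegral.integral_const_mul]
  congr 1
  · refine integral_congr fun y hy => ?_
    rw [uIcc_of_le hz.1] at hy
    simp only [max_eq_left hy.2, mul_comm]
  · refine integral_congr fun y hy => ?_
    rw [uIcc_of_le hz.2] at hy
    simp only [max_eq_right hy.1]

theorem integral_integral_mul_comp_max (hab : a ≤ b) (hg : ContinuousOn g (Icc a b))
    (hE : ∀ x, HasDerivAt E (-w x) x) (hw : ContinuousOn w (Icc a b)) (hEb : E b = 0) :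
    ∫ z in a..b, ∫ y in a..b, g z * g y * E (max z y)
      = ∫ t in a..b, w t * (∫ s in a..t, g s) ^ 2 := by
  set H : ℝ → ℝ := fun t => ∫ s in a..t, g s
  set K : ℝ → ℝ := fun z => E z * H z + ∫ y in z..b, g y * E y
  have hEc : Continuous E := continuous_iff_continuousAt.mpr fun x => (hE x).continuousAt
  have hgE : ContinuousOn (fun y => g y * E y) (Icc a b) := hg.mul hEc.continuousOn
  have hH : ContinuousOn H (Icc a b) := hg.continuousOn_primitive hab
  have hK : ContinuousOn K (Icc a b) :=
    (hEc.continuousOn.mul hH).add (hgE.continuousOn_primitive_left hab)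
  have hK' : ∀ x ∈ Ioo a b, HasDerivAt K (-w x * H x) x := fun x hx => by
    refine (((hE x).mul (hg.hasDerivAt_integral_right hx)).add
      (hgE.hasDerivAt_integral_left hx)).congr_deriv ?_
    ring
  have hinner : ∀ z ∈ uIcc a b, ∫ y in a..b, g z * g y * E (max z y) = K z * g z := by
    intro z hz
    rw [uIcc_of_le hab] at hz
    simp only [mul_assoc]
    rw [intervalIntegral.integral_const_mul, integral_mul_comp_max hg hEc hz]
    ring
  have hKb : K b = 0 := by simp [K, hEb]
  have hHa : H a = 0 := integral_same
  rw [integral_congr hinner, integral_mul_deriv_eq_deriv_mul_of_hasDerivAt (u := K) (v := H)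
    (u' := fun x => -w x * H x) (v' := g)
    (by rwa [uIcc_of_le hab]) (by rwa [uIcc_of_le hab])
    (by simpa only [min_eq_left hab, max_eq_right hab] using hK')
    (by simpa only [min_eq_left hab, max_eq_right hab] using
      fun x hx => hg.hasDerivAt_integral_right hx)
    ((hw.neg.mul hH).intervalIntegrable_of_Icc hab)
    (hg.intervalIntegrable_of_Icc hab), hKb, hHa]
  simp only [zero_mul, mul_zero, sub_zero, zero_sub, ← intervalIntegral.integral_neg]
  refine integral_congr fun t _ => ?_
  ring

end MaxKernel

theorem integral_mul_primitive_sq_pos {a b : ℝ} {g w : ℝ → ℝ} (hab : a < b)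
    (hw : ContinuousOn w (Icc a b)) (hw_pos : ∀ t ∈ Icc a b, 0 < w t)
    (hg : ContinuousOn g (Icc a b)) (hne : ∃ z ∈ Icc a b, g z ≠ 0) :
    0 < ∫ t in a..b, w t * (∫ s in a..t, g s) ^ 2 := by
  obtain ⟨t, ht, hHt⟩ : ∃ t ∈ Icc a b, ∫ s in a..t, g s ≠ 0 := by
    by_contra! h
    obtain ⟨z, hz, hgz⟩ := hne
    exact hgz (hg.eqOn_zero_of_primitive_eqOn_zero hab h hz)
  simpa using integral_lt_integral_of_continuousOn_of_le_of_exists_lt hab continuousOn_const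
    (hw.mul ((hg.continuousOn_primitive hab.le).pow 2))
    (fun x hx => mul_nonneg (hw_pos x (Ioc_subset_Icc_self hx)).le (sq_nonneg _))
    ⟨t, ht, mul_pos (hw_pos t ht) (pow_two_pos_of_ne_zero hHt)⟩

theorem half_exp_sub_half_exp_eq_exp_mul_exp_max (ζ z y : ℝ) :
    (1/2) * Real.exp (-|z - y|) - (1/2) * Real.exp (z + y - 2*ζ)
      = Real.exp z * Real.exp y * ((Real.exp (-(2 * max z y)) - Real.exp (-(2 * ζ))) / 2) := by
  have habs : -|z - y| = z + y + -(2 * max z y) := by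
    rcases le_total z y with h | h
    · rw [max_eq_right h, abs_of_nonpos (by linarith)]; ring
    · rw [max_eq_left h, abs_of_nonneg (by linarith)]; ring
  rw [habs, show z + y - 2 * ζ = z + y + -(2 * ζ) by ring]
  simp only [Real.exp_add]
  ring

theorem left_child_kernel_positive_definite_general
    (ζ : ℝ) (hζ0 : 0 < ζ)
    (f : ℝ → ℝ) (hf : ContinuousOn f (Set.Icc 0 ζ))
    (hne : ∃ z ∈ Set.Icc (0:ℝ) ζ, f z ≠ 0) :
    0 < ∫ z in (0:ℝ)..ζ, ∫ y in (0:ℝ)..ζ,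
          f z * ((1/2) * Real.exp (-|z - y|) - (1/2) * Real.exp (z + y - 2*ζ)) * f y := by
  set g : ℝ → ℝ := fun z => f z * Real.exp z
  set E : ℝ → ℝ := fun m => (Real.exp (-(2 * m)) - Real.exp (-(2 * ζ))) / 2
  have hE : ∀ x, HasDerivAt E (-Real.exp (-(2 * x))) x := fun x =>
    ((((hasDerivAt_id x).const_mul 2).neg.exp.sub_const _).div_const 2).congr_deriv (by simp; ring)
  have hkernel : ∀ z y,
      f z * ((1/2) * Real.exp (-|z - y|) - (1/2) * Real.exp (z + y - 2*ζ)) * f y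
        = g z * g y * E (max z y) := fun z y => by
    rw [half_exp_sub_half_exp_eq_exp_mul_exp_max]; ring
  have hg : ContinuousOn g (Icc 0 ζ) := hf.mul Real.continuous_exp.continuousOn
  simp only [hkernel]
  rw [integral_integral_mul_comp_max hζ0.le hg hE (by fun_prop) (by simp [E])]
  exact integral_mul_primitive_sq_pos hζ0 (by fun_prop) (fun t _ => Real.exp_pos _) hg
    (hne.imp fun z ⟨hz, hfz⟩ => ⟨hz, mul_ne_zero hfz (Real.exp_ne_zero z)⟩)

/-- The left-child kernel `G_l(z,y) = (1/2)e^{-|z-y|} - (1/2)e^{z+y-2ζ}` is positive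
definite on `[0,ζ]`: for every continuous `f : [0,ζ] → ℝ` not identically zero,
`∫₀^ζ∫₀^ζ f(z) G_l(z,y) f(y) dy dz > 0`. -/
theorem left_child_kernel_positive_definite
    (ζ : ℝ) (hζ0 : 0 < ζ) (hζ1 : ζ < 1)
    (f : ℝ → ℝ) (hf : ContinuousOn f (Set.Icc 0 ζ))
    (hne : ∃ z ∈ Set.Icc (0:ℝ) ζ, f z ≠ 0) :
    0 < ∫ z in (0:ℝ)..ζ, ∫ y in (0:ℝ)..ζ,
          f z * ((1/2) * Real.exp (-|z - y|) - (1/2) * Real.exp (z + y - 2*ζ)) * f y :=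
  left_child_kernel_positive_definite_general ζ hζ0 f hf hne
end

section
/- Let a < c < b be real numbers. Set γ̃² = sinh(b-c) / (sinh(b-a)·sinh(c-a)). Then for all z, y ∈ [a,c]: sinh(min(z,y)-a)·sinh(b-max(z,y))/sinh(b-a) - γ̃²·sinh(z-a)·sinh(y-a) = sinh(min(z,y)-a)·sinh(c-max(z,y))/sinh(c-a). That is, subtracting the rank-one term γ̃²·g_l(z)·g_l(y) with g_l(z) = sinh(z-a) from the parent interior-node Green's function on [a,b] yields exactly the left child's interior-node Green's function on [a,c]. -/
lemma sinh_key (a b c t : ℝ) :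
    Real.sinh (b - t) * Real.sinh (c - a) - Real.sinh (b - c) * Real.sinh (t - a)
      = Real.sinh (c - t) * Real.sinh (b - a) := by
  simp only [Real.sinh_eq, Real.exp_sub, Real.exp_neg]
  have := (Real.exp_pos a).ne'
  have := (Real.exp_pos b).ne'
  have := (Real.exp_pos c).ne'
  have := (Real.exp_pos t).ne'
  field_simp
  ring

/-- Divide step, left child: subtracting the rank-one term `γ̃²·sinh(z-a)·sinh(y-a)` with
`γ̃² = sinh(b-c)/(sinh(b-a)·sinh(c-a))` from the parent interior-node Green's function on
`[a,b]` yields exactly the left child's interior-node Green's function on `[a,c]`. -/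
theorem left_child_green_function_subtraction
    (a c b : ℝ) (hac : a < c) (hcb : c < b)
    (z y : ℝ) (hz : z ∈ Set.Icc a c) (hy : y ∈ Set.Icc a c) :
    Real.sinh (min z y - a) * Real.sinh (b - max z y) / Real.sinh (b - a)
      - (Real.sinh (b - c) / (Real.sinh (b - a) * Real.sinh (c - a)))
          * (Real.sinh (z - a) * Real.sinh (y - a))
    = Real.sinh (min z y - a) * Real.sinh (c - max z y) / Real.sinh (c - a) := by
  have hba : Real.sinh (b - a) ≠ 0 :=
    ne_of_gt (Real.sinh_pos_iff.2 (by linarith))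
  have hca : Real.sinh (c - a) ≠ 0 :=
    ne_of_gt (Real.sinh_pos_iff.2 (by linarith))
  rcases le_total z y with h | h
  · rw [min_eq_left h, max_eq_right h, div_mul_eq_mul_div, div_sub_div _ _ hba (mul_ne_zero hba hca),
      div_eq_div_iff (mul_ne_zero hba (mul_ne_zero hba hca)) hca]
    linear_combination (Real.sinh (b - a) * Real.sinh (c - a) * Real.sinh (z - a)) *
      sinh_key a b c y
  · rw [min_eq_right h, max_eq_left h, div_mul_eq_mul_div, div_sub_div _ _ hba (mul_ne_zero hba hca),
      div_eq_div_iff (mul_ne_zero hba (mul_ne_zero hba hca)) hca]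
    linear_combination (Real.sinh (b - a) * Real.sinh (c - a) * Real.sinh (y - a)) *
      sinh_key a b c z
end

section
/- Let a < c < b be real numbers. Set κ = sinh(c-a) / (sinh(b-a)·sinh(b-c)). Then for all z, y ∈ [c,b]: sinh(min(z,y)-a)·sinh(b-max(z,y))/sinh(b-a) - κ·sinh(b-z)·sinh(b-y) = sinh(min(z,y)-c)·sinh(b-max(z,y))/sinh(b-c). That is, subtracting the rank-one term (1/γ̃²)·g_r(z)·g_r(y) with g_r(z) = sinh(b-z) and 1/γ̃² = κ from the parent interior-node Green's function on [a,b] yields exactly the right child's interior-node Green's function on [c,b]. -/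
set_option maxHeartbeats 1000000


/-- Divide step, right child: subtracting the rank-one term `κ·sinh(b-z)·sinh(b-y)` with
`κ = 1/γ̃² = sinh(c-a)/(sinh(b-a)·sinh(b-c))` from the parent interior-node Green's
function on `[a,b]` yields exactly the right child's interior-node Green's function on
`[c,b]`. -/
theorem right_child_green_function_subtraction
    (a c b : ℝ) (hac : a < c) (hcb : c < b)
    (z y : ℝ) (hz : z ∈ Set.Icc c b) (hy : y ∈ Set.Icc c b) :
    Real.sinh (min z y - a) * Real.sinh (b - max z y) / Real.sinh (b - a)
      - (Real.sinh (c - a) / (Real.sinh (b - a) * Real.sinh (b - c)))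
          * (Real.sinh (b - z) * Real.sinh (b - y))
    = Real.sinh (min z y - c) * Real.sinh (b - max z y) / Real.sinh (b - c) := by
  have ha : Real.sinh (b - a) ≠ 0 := Real.sinh_ne_zero.2 (by linarith)
  have hc : Real.sinh (b - c) ≠ 0 := Real.sinh_ne_zero.2 (by linarith)
  have key : Real.sinh (b - z) * Real.sinh (b - y)
      = Real.sinh (b - min z y) * Real.sinh (b - max z y) := by
    rcases le_total z y with h | h <;>
      simp [min_eq_left, max_eq_right, min_eq_right, max_eq_left, h] <;> ring
  rw [key]
  field_simp
  simp only [Real.sinh_eq, Real.exp_sub, neg_sub]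
  field_simp [Real.exp_ne_zero]
  ring
end

section
/- Let a < c < b and G(z,y) = sinh(min(z,y)-a)·sinh(b-max(z,y))/sinh(b-a). For every continuous f : [a,b] → ℝ that is not identically zero, ∫ₐᵇ ∫ₐᵇ f(z) G(z,y) f(y) dy dz > 0. -/
/-!
The double integral is `∫ f u` with `u(z) = ∫ G(z,y) f(y) dy`, and `u` is the solution of
`u - u'' = f`, `u(a) = u(b) = 0`, obtained by variation of constants from `sinh (· - a)` and
`sinh (b - ·)`. Integrating by parts, `∫ f u = ∫ (u - u'') u = ∫ (u² + u'²)`, which is positive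
unless `u` vanishes identically, and then so does `f = u - u''`.
-/

open MeasureTheory intervalIntegral Set Real

section EnergyIdentity

variable {a b : ℝ} {f u v : ℝ → ℝ}

theorem integral_mul_eq_integral_sq_add_sq_of_hasDerivAt (hab : a ≤ b)
    (hf : ContinuousOn f (Icc a b)) (hu : ContinuousOn u (Icc a b))
    (hv : ContinuousOn v (Icc a b)) (hu' : ∀ x ∈ Ioo a b, HasDerivAt u (v x) x)
    (hv' : ∀ x ∈ Ioo a b, HasDerivAt v (u x - f x) x) (ha : u a = 0) (hb : u b = 0) :
    ∫ x in a..b, f x * u x = ∫ x in a..b, (u x ^ 2 + v x ^ 2) := by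
  have hfu : IntervalIntegrable (fun x => f x * u x) volume a b :=
    (hf.mul hu).intervalIntegrable_of_Icc hab
  have hE : IntervalIntegrable (fun x => u x ^ 2 + v x ^ 2) volume a b :=
    ((hu.pow 2).add (hv.pow 2)).intervalIntegrable_of_Icc hab
  have hflux : ∫ x in a..b, (u x ^ 2 + v x ^ 2 - f x * u x) = 0 := by
    rw [integral_eq_sub_of_hasDerivAt_of_le hab (hv.mul hu)
      (fun x hx => ((hv' x hx).mul (hu' x hx)).congr_deriv (by ring)) (hE.sub hfu)]
    simp [ha, hb]
  rw [integral_sub hE hfu] at hflux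
  linarith

theorem integral_sq_add_sq_pos_of_hasDerivAt (hab : a < b)
    (hf : ContinuousOn f (Icc a b)) (hu : ContinuousOn u (Icc a b))
    (hv : ContinuousOn v (Icc a b)) (hv' : ∀ x ∈ Ioo a b, HasDerivAt v (u x - f x) x)
    (hne : ∃ z ∈ Icc a b, f z ≠ 0) :
    0 < ∫ x in a..b, (u x ^ 2 + v x ^ 2) := by
  refine integral_pos hab ((hu.pow 2).add (hv.pow 2)) (fun x _ => by positivity) ?_
  by_contra! hzero
  have huv : ∀ x ∈ Icc a b, u x = 0 ∧ v x = 0 := fun x hx => by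
    have := hzero x hx
    constructor <;> nlinarith [sq_nonneg (u x), sq_nonneg (v x)]
  have hf_Ioo : EqOn f 0 (Ioo a b) := fun x hx => by
    show f x = 0
    have hv0 : HasDerivAt v 0 x := (hasDerivAt_const x 0).congr_of_eventuallyEq
      (Filter.eventually_of_mem (Icc_mem_nhds hx.1 hx.2) fun y hy => (huv y hy).2)
    have := (hv' x hx).unique hv0
    linarith [(huv x (Ioo_subset_Icc_self hx)).1]
  obtain ⟨z, hz, hfz⟩ := hne
  exact hfz (hf_Ioo.of_subset_closure hf continuousOn_const Ioo_subset_Icc_self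
    (closure_Ioo hab.ne).ge hz)

end EnergyIdentity

noncomputable def sinhGreen (a b z y : ℝ) : ℝ :=
  sinh (min z y - a) * sinh (b - max z y) / sinh (b - a)

noncomputable def leftMoment (a : ℝ) (f : ℝ → ℝ) (x : ℝ) : ℝ :=
  ∫ s in a..x, f s * sinh (s - a)

noncomputable def rightMoment (b : ℝ) (f : ℝ → ℝ) (x : ℝ) : ℝ :=
  ∫ s in x..b, f s * sinh (b - s)

noncomputable def greenSolution (a b : ℝ) (f : ℝ → ℝ) (x : ℝ) : ℝ :=
  (sinh (b - x) * leftMoment a f x + sinh (x - a) * rightMoment b f x) / sinh (b - a)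

noncomputable def greenSolutionDeriv (a b : ℝ) (f : ℝ → ℝ) (x : ℝ) : ℝ :=
  (cosh (x - a) * rightMoment b f x - cosh (b - x) * leftMoment a f x) / sinh (b - a)

section GreenSolution

variable {a b : ℝ} {f : ℝ → ℝ}

theorem continuousOn_leftMoment (hab : a ≤ b) (hf : ContinuousOn f (Icc a b)) :
    ContinuousOn (leftMoment a f) (Icc a b) := by
  have h := continuousOn_primitive_interval (a := a) (b := b)
    (f := fun s => f s * sinh (s - a)) (μ := volume)
  rw [uIcc_of_le hab] at h
  exact h (hf.mul (by fun_prop)).integrableOn_Icc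

theorem continuousOn_rightMoment (hab : a ≤ b) (hf : ContinuousOn f (Icc a b)) :
    ContinuousOn (rightMoment b f) (Icc a b) := by
  have h := continuousOn_primitive_interval_left (a := a) (b := b)
    (f := fun s => f s * sinh (b - s)) (μ := volume)
  rw [uIcc_of_le hab] at h
  exact h (hf.mul (by fun_prop)).integrableOn_Icc

theorem hasDerivAt_leftMoment (hf : ContinuousOn f (Icc a b)) {x : ℝ} (hx : x ∈ Ioo a b) :
    HasDerivAt (leftMoment a f) (f x * sinh (x - a)) x := by
  have hg : ContinuousOn (fun s => f s * sinh (s - a)) (Icc a b) := hf.mul (by fun_prop)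
  refine integral_hasDerivAt_right ?_ ((hg.mono Ioo_subset_Icc_self).stronglyMeasurableAtFilter
    isOpen_Ioo x hx) (hg.continuousAt (Icc_mem_nhds hx.1 hx.2))
  exact (hg.mono (Icc_subset_Icc le_rfl hx.2.le)).intervalIntegrable_of_Icc hx.1.le

theorem hasDerivAt_rightMoment (hf : ContinuousOn f (Icc a b)) {x : ℝ} (hx : x ∈ Ioo a b) :
    HasDerivAt (rightMoment b f) (-(f x * sinh (b - x))) x := by
  have hg : ContinuousOn (fun s => f s * sinh (b - s)) (Icc a b) := hf.mul (by fun_prop)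
  refine integral_hasDerivAt_left ?_ ((hg.mono Ioo_subset_Icc_self).stronglyMeasurableAtFilter
    isOpen_Ioo x hx) (hg.continuousAt (Icc_mem_nhds hx.1 hx.2))
  exact (hg.mono (Icc_subset_Icc hx.1.le le_rfl)).intervalIntegrable_of_Icc hx.2.le

theorem continuousOn_greenSolution (hab : a ≤ b) (hf : ContinuousOn f (Icc a b)) :
    ContinuousOn (greenSolution a b f) (Icc a b) := by
  have hL := continuousOn_leftMoment hab hf
  have hR := continuousOn_rightMoment hab hf
  unfold greenSolution
  fun_prop

theorem continuousOn_greenSolutionDeriv (hab : a ≤ b) (hf : ContinuousOn f (Icc a b)) :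
    ContinuousOn (greenSolutionDeriv a b f) (Icc a b) := by
  have hL := continuousOn_leftMoment hab hf
  have hR := continuousOn_rightMoment hab hf
  unfold greenSolutionDeriv
  fun_prop

theorem hasDerivAt_greenSolution (hf : ContinuousOn f (Icc a b)) {x : ℝ} (hx : x ∈ Ioo a b) :
    HasDerivAt (greenSolution a b f) (greenSolutionDeriv a b f x) x := by
  have h₁ := ((hasDerivAt_id' x).const_sub b).sinh
  have h₂ := ((hasDerivAt_id' x).sub_const a).sinh
  refine (((h₁.mul (hasDerivAt_leftMoment hf hx)).add
    (h₂.mul (hasDerivAt_rightMoment hf hx))).div_const (sinh (b - a))).congr_deriv ?_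
  simp only [greenSolutionDeriv]
  ring

theorem hasDerivAt_greenSolutionDeriv (hab : a < b) (hf : ContinuousOn f (Icc a b)) {x : ℝ}
    (hx : x ∈ Ioo a b) :
    HasDerivAt (greenSolutionDeriv a b f) (greenSolution a b f x - f x) x := by
  have h₁ := ((hasDerivAt_id' x).sub_const a).cosh
  have h₂ := ((hasDerivAt_id' x).const_sub b).cosh
  refine (((h₁.mul (hasDerivAt_rightMoment hf hx)).sub
    (h₂.mul (hasDerivAt_leftMoment hf hx))).div_const (sinh (b - a))).congr_deriv ?_
  -- the `f x` terms combine through the Wronskian `sinh (b - a)`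
  have hW : sinh (b - a) = sinh (b - x) * cosh (x - a) + cosh (b - x) * sinh (x - a) := by
    rw [← sinh_add]; ring_nf
  have hW₀ : sinh (b - a) ≠ 0 := (sinh_pos_iff.mpr (sub_pos.mpr hab)).ne'
  simp only [greenSolution]
  field_simp
  rw [hW]
  ring

theorem greenSolution_left : greenSolution a b f a = 0 := by
  simp [greenSolution, leftMoment]

theorem greenSolution_right : greenSolution a b f b = 0 := by
  simp [greenSolution, rightMoment]

theorem integral_sinhGreen_mul (hf : ContinuousOn f (Icc a b)) {z : ℝ} (hz : z ∈ Icc a b) :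
    ∫ y in a..b, sinhGreen a b z y * f y = greenSolution a b f z := by
  have hG : Continuous (sinhGreen a b z) := by unfold sinhGreen; fun_prop
  have hint : ∀ {c d : ℝ}, Icc c d ⊆ Icc a b → c ≤ d →
      IntervalIntegrable (fun y => sinhGreen a b z y * f y) volume c d := fun hs hcd =>
    (hG.continuousOn.mul (hf.mono hs)).intervalIntegrable_of_Icc hcd
  have hleft : ∫ y in a..z, sinhGreen a b z y * f y
      = sinh (b - z) / sinh (b - a) * leftMoment a f z := by
    rw [leftMoment, ← intervalIntegral.integral_const_mul]
    refine integral_congr fun y hy => ?_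
    rw [uIcc_of_le hz.1] at hy
    simp only [sinhGreen, min_eq_right hy.2, max_eq_left hy.2]
    ring
  have hright : ∫ y in z..b, sinhGreen a b z y * f y
      = sinh (z - a) / sinh (b - a) * rightMoment b f z := by
    rw [rightMoment, ← intervalIntegral.integral_const_mul]
    refine integral_congr fun y hy => ?_
    rw [uIcc_of_le hz.2] at hy
    simp only [sinhGreen, min_eq_left hy.1, max_eq_right hy.1]
    ring
  rw [← integral_add_adjacent_intervals (hint (Icc_subset_Icc le_rfl hz.2) hz.1)
    (hint (Icc_subset_Icc hz.1 le_rfl) hz.2), hleft, hright, greenSolution]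
  ring

end GreenSolution

/-- The interior-node Green's function
`G(z,y) = sinh(min(z,y)-a)·sinh(b-max(z,y))/sinh(b-a)` is positive definite on `[a,b]`:
for every continuous `f : [a,b] → ℝ` not identically zero,
`∫ₐᵇ∫ₐᵇ f(z) G(z,y) f(y) dy dz > 0`. -/
theorem interior_node_kernel_positive_definite
    (a c b : ℝ) (hac : a < c) (hcb : c < b)
    (f : ℝ → ℝ) (hf : ContinuousOn f (Set.Icc a b))
    (hne : ∃ z ∈ Set.Icc a b, f z ≠ 0) :
    0 < ∫ z in a..b, ∫ y in a..b,
          f z * (Real.sinh (min z y - a) * Real.sinh (b - max z y) / Real.sinh (b - a))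
            * f y := by
  have hab : a < b := hac.trans hcb
  have hinner : ∀ z ∈ uIcc a b,
      ∫ y in a..b, f z * sinhGreen a b z y * f y = f z * greenSolution a b f z := by
    intro z hz
    rw [uIcc_of_le hab.le] at hz
    simp_rw [mul_assoc, intervalIntegral.integral_const_mul, integral_sinhGreen_mul hf hz]
  have hu := continuousOn_greenSolution hab.le hf
  have hv := continuousOn_greenSolutionDeriv hab.le hf
  have hv' : ∀ x ∈ Ioo a b,
      HasDerivAt (greenSolutionDeriv a b f) (greenSolution a b f x - f x) x :=
    fun _ hx => hasDerivAt_greenSolutionDeriv hab hf hx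
  calc 0 < ∫ x in a..b, (greenSolution a b f x ^ 2 + greenSolutionDeriv a b f x ^ 2) :=
        integral_sq_add_sq_pos_of_hasDerivAt hab hf hu hv hv' hne
    _ = ∫ z in a..b, f z * greenSolution a b f z :=
        (integral_mul_eq_integral_sq_add_sq_of_hasDerivAt hab.le hf hu hv
          (fun _ hx => hasDerivAt_greenSolution hf hx) hv' greenSolution_left
          greenSolution_right).symm
    _ = _ := (integral_congr hinner).symm
end

section
/- Let m, n, P ≥ 1, let A₁₁ be a symmetric m×m real matrix, A₄ a symmetric n×n real matrix, V an m×P real matrix, U an n×P real matrix, Λ a symmetric P×P real matrix, and B an invertible P×P real matrix commuting with Λ (ΛB = BΛ). Let A be the block matrix A = [[A₁₁, VΛUᵀ], [UΛVᵀ, A₄]]. Then for all x₁ ∈ ℝ^m and x₂ ∈ ℝ^n, with x = (x₁; x₂): xᵀAx = x₁ᵀ(A₁₁ - V B⁻¹ Λ B⁻ᵀ Vᵀ)x₁ + x₂ᵀ(A₄ - U Bᵀ Λ B Uᵀ)x₂ + (B Uᵀx₂ + B⁻ᵀ Vᵀx₁)ᵀ Λ (B Uᵀ x₂ + B⁻ᵀ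 Vᵀ x₁), where B⁻ᵀ denotes the inverse transpose of B. -/
open Matrix

lemma mulVec_dotProduct_mulVec {k l p : Type*} [Fintype k] [Fintype l] [Fintype p]
    (M : Matrix k l ℝ) (N : Matrix k p ℝ) (x : l → ℝ) (y : p → ℝ) :
    (M *ᵥ x) ⬝ᵥ (N *ᵥ y) = x ⬝ᵥ ((Mᵀ * N) *ᵥ y) := by
  rw [Matrix.dotProduct_mulVec, Matrix.dotProduct_mulVec, Matrix.vecMul_mulVec]

/-- Completing-the-square identity for a block matrix with rank-`P` off-diagonal blocks
`VΛUᵀ` and `UΛVᵀ`: for `A₁₁`, `A₄`, `Λ` symmetric, `B` invertible with `ΛB = BΛ`,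
`xᵀAx = x₁ᵀ(A₁₁ - VB⁻¹ΛB⁻ᵀVᵀ)x₁ + x₂ᵀ(A₄ - UBᵀΛBUᵀ)x₂
        + (BUᵀx₂ + B⁻ᵀVᵀx₁)ᵀ Λ (BUᵀx₂ + B⁻ᵀVᵀx₁)`. -/
theorem block_rank_P_complete_square
    (m n P : ℕ) (hm : 1 ≤ m) (hn : 1 ≤ n) (hP : 1 ≤ P)
    (A₁₁ : Matrix (Fin m) (Fin m) ℝ) (hA₁₁ : A₁₁.IsSymm)
    (A₄ : Matrix (Fin n) (Fin n) ℝ) (hA₄ : A₄.IsSymm)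
    (V : Matrix (Fin m) (Fin P) ℝ) (U : Matrix (Fin n) (Fin P) ℝ)
    (Λ : Matrix (Fin P) (Fin P) ℝ) (hΛ : Λ.IsSymm)
    (B : Matrix (Fin P) (Fin P) ℝ) (hB : IsUnit B.det) (hcomm : Λ * B = B * Λ)
    (x₁ : Fin m → ℝ) (x₂ : Fin n → ℝ) :
    Sum.elim x₁ x₂ ⬝ᵥ
        (Matrix.fromBlocks A₁₁ (V * Λ * Uᵀ) (U * Λ * Vᵀ) A₄).mulVec (Sum.elim x₁ x₂)
      = x₁ ⬝ᵥ (A₁₁ - V * B⁻¹ * Λ * (B⁻¹)ᵀ * Vᵀ).mulVec x₁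
        + x₂ ⬝ᵥ (A₄ - U * Bᵀ * Λ * B * Uᵀ).mulVec x₂
        + (B.mulVec (Uᵀ.mulVec x₂) + (B⁻¹)ᵀ.mulVec (Vᵀ.mulVec x₁)) ⬝ᵥ
            Λ.mulVec (B.mulVec (Uᵀ.mulVec x₂) + (B⁻¹)ᵀ.mulVec (Vᵀ.mulVec x₁)) := by
  have hBB : B⁻¹ * B = 1 := Matrix.nonsing_inv_mul B hB
  have h1 : B⁻¹ * (Λ * B) = Λ := by
    rw [hcomm, ← Matrix.mul_assoc, hBB, Matrix.one_mul]
  have h2 : Bᵀ * (Λ * (B⁻¹)ᵀ) = Λ := by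
    have := congrArg Matrix.transpose h1
    simpa [Matrix.transpose_mul, hΛ.eq, Matrix.mul_assoc] using this
  have h1' : B⁻¹ * (Λ * (B * Uᵀ)) = Λ * Uᵀ := by
    rw [← Matrix.mul_assoc Λ, ← Matrix.mul_assoc B⁻¹ (Λ * B) Uᵀ, h1]
  have h2' : Bᵀ * (Λ * ((B⁻¹)ᵀ * Vᵀ)) = Λ * Vᵀ := by
    rw [← Matrix.mul_assoc Λ, ← Matrix.mul_assoc Bᵀ (Λ * (B⁻¹)ᵀ) Vᵀ, h2]
  simp only [Matrix.fromBlocks_mulVec, sumElim_dotProduct_sumElim,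
    Matrix.sub_mulVec, dotProduct_sub, Matrix.mulVec_add, add_dotProduct,
    dotProduct_add, Matrix.dotProduct_mulVec, Matrix.mulVec_vecMul,
    Matrix.vecMul_vecMul, Matrix.add_vecMul, Matrix.vecMul_mulVec,
    Matrix.transpose_transpose, Sum.elim_comp_inl, Sum.elim_comp_inr,
    Matrix.mul_assoc, h1', h2']
  ring
end
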